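/- arXiv:2502.05316 — 3 statements merged into one kernel-verified Lean document; each statement's English description precedes it below -/
import Mathlib

section
/- Let (Ω, P) be a probability space, let X : Ω → ℝ be a measurable random variable that is essentially bounded below, and let β > 1. Then the entropic risk measure of X converges to the essential infimum of X as the risk parameter tends to +∞; that is, lim_{ρ → +∞} ( -(1/ρ) · log_β ( E[ β^{-ρ·X} ] ) ) = essInf X. -/
open MeasureTheory Real Filter

/-- The entropic risk measure converges to the essential infimum as ρ → +∞. -/
theorem entropic_risk_tendsto_essInf
    {Ω : Type*} [MeasurableSpace Ω] (P : Measure Ω) [IsProbabilityMeasure P]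
    (X : Ω → ℝ) (hX : Measurable X)
    (hbdd : ∃ C : ℝ, ∀ᵐ ω ∂P, C ≤ X ω)
    (β : ℝ) (hβ : 1 < β) :
    Tendsto
      (fun ρ : ℝ => -(1 / ρ) * (Real.log (∫ ω, β ^ (-(ρ * X ω)) ∂P) / Real.log β))
      atTop (nhds (essInf X P)) := by
  obtain ⟨C, hC⟩ := hbdd
  have hβ0 : (0:ℝ) < β := lt_trans one_pos hβ
  set L : ℝ := Real.log β with hLdef
  have hL : 0 < L := Real.log_pos hβ
  set m : ℝ := essInf X P with hmdef
  have hbd : IsBoundedUnder (· ≥ ·) (ae P) X :=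
    ⟨C, eventually_map.2 (hC.mono fun ω h => h)⟩
  have hm : ∀ᵐ ω ∂P, m ≤ X ω := ae_essInf_le hbd
  -- coboundedness of X from below under the ae filter
  have hcb : IsCoboundedUnder (· ≥ ·) (ae P) X := by
    obtain ⟨n, hn⟩ : ∃ n : ℕ, P {ω | X ω ≤ (n:ℝ)} ≠ 0 := by
      by_contra h
      push_neg at h
      have h0 : P (⋃ n : ℕ, {ω | X ω ≤ (n:ℝ)}) = 0 := measure_iUnion_null h
      have huniv : (⋃ n : ℕ, {ω | X ω ≤ (n:ℝ)}) = Set.univ := by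
        ext ω
        simp only [Set.mem_iUnion, Set.mem_setOf_eq, Set.mem_univ, iff_true]
        exact exists_nat_ge (X ω)
      rw [huniv, measure_univ] at h0
      exact one_ne_zero h0
    refine ⟨(n:ℝ), fun a ha => ?_⟩
    rw [eventually_map] at ha
    by_contra hna
    push_neg at hna
    have hsub : {ω | X ω ≤ (n:ℝ)} ⊆ {ω | ¬ a ≤ X ω} := fun ω h => by
      simp only [Set.mem_setOf_eq, not_le] at *
      linarith
    have ha' : P {ω | ¬ a ≤ X ω} = 0 := ha
    exact hn (measure_mono_null hsub ha')
  -- positive mass below m + δ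
  have hmass : ∀ δ : ℝ, 0 < δ → P {ω | X ω < m + δ} ≠ 0 := by
    intro δ hδ h0
    have hae : ∀ᵐ ω ∂P, m + δ ≤ X ω := by
      rw [ae_iff]
      simpa only [not_le] using h0
    have : m + δ ≤ m := by
      have hle : m + δ ≤ (ae P).liminf X :=
        le_liminf_of_le hcb (eventually_map.2 hae)
      exact hle
    linarith
  rw [Metric.tendsto_atTop]
  intro ε hε
  set δ : ℝ := ε / 2 with hδdef
  have hδ : 0 < δ := by positivity
  set A : Set Ω := {ω | X ω < m + δ} with hAdef
  have hA : MeasurableSet A := measurableSet_lt hX measurable_const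
  set p : ℝ := (P A).toReal with hpdef
  have hp : 0 < p := ENNReal.toReal_pos (hmass δ hδ) (measure_ne_top P A)
  have hp1 : p ≤ 1 := by
    have h := ENNReal.toReal_mono (by norm_num : (1 : ENNReal) ≠ ⊤)
      (prob_le_one (μ := P) (s := A))
    simpa using h
  have hlogp : Real.log p ≤ 0 := Real.log_nonpos hp.le hp1
  refine ⟨max 1 ((1 - Real.log p) / (δ * L)), fun ρ hρN => ?_⟩
  have hρ1 : 1 ≤ ρ := le_trans (le_max_left _ _) hρN
  have hρ : 0 < ρ := lt_of_lt_of_le one_pos hρ1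
  have hρ2 : 1 - Real.log p ≤ ρ * (δ * L) := by
    have h := le_trans (le_max_right 1 ((1 - Real.log p) / (δ * L))) hρN
    rwa [div_le_iff₀ (by positivity)] at h
  -- the integrand and its integrability
  set f : Ω → ℝ := fun ω => β ^ (-(ρ * X ω)) with hfdef
  have hfmeas : Measurable f := by
    have hfe : f = fun ω => Real.exp (Real.log β * -(ρ * X ω)) :=
      funext fun ω => Real.rpow_def_of_pos hβ0 _
    rw [hfe]
    exact (measurable_const.mul ((hX.const_mul ρ).neg)).exp
  have hfpos : ∀ ω, 0 < f ω := fun ω => Real.rpow_pos_of_pos hβ0 _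
  have hint : Integrable f P := by
    refine (integrable_const (β ^ (-(ρ * C)))).mono' hfmeas.aestronglyMeasurable ?_
    filter_upwards [hC] with ω h
    rw [Real.norm_eq_abs, abs_of_pos (hfpos ω)]
    exact (Real.rpow_le_rpow_left_iff hβ).2 (by nlinarith)
  set I : ℝ := ∫ ω, f ω ∂P with hIdef
  -- upper bound on the integral
  have hup : I ≤ β ^ (-(ρ * m)) := by
    have h1 : I ≤ ∫ _ω, β ^ (-(ρ * m)) ∂P := by
      refine integral_mono_ae hint (integrable_const _) ?_
      filter_upwards [hm] with ω h
      exact (Real.rpow_le_rpow_left_iff hβ).2 (by nlinarith)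
    simpa using h1
  -- lower bound on the integral
  have hlow : p * β ^ (-(ρ * (m + δ))) ≤ I := by
    have hptw : ∀ ω, A.indicator (fun _ => β ^ (-(ρ * (m + δ)))) ω ≤ f ω := by
      intro ω
      by_cases hω : ω ∈ A
      · rw [Set.indicator_of_mem hω]
        have hXω : X ω < m + δ := hω
        exact (Real.rpow_le_rpow_left_iff hβ).2 (by nlinarith)
      · rw [Set.indicator_of_notMem hω]
        exact (hfpos ω).le
    have h1 : ∫ ω, A.indicator (fun _ => β ^ (-(ρ * (m + δ)))) ω ∂P ≤ I :=
      integral_mono ((integrable_const _).indicator hA) hint hptw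
    rwa [integral_indicator_const _ hA, smul_eq_mul, measureReal_def, ← hpdef] at h1
  have hIpos : 0 < I := lt_of_lt_of_le (by positivity) hlow
  -- log bounds
  have hlog1 : Real.log I ≤ -(ρ * m) * L := by
    calc Real.log I ≤ Real.log (β ^ (-(ρ * m))) := Real.log_le_log hIpos hup
    _ = -(ρ * m) * L := Real.log_rpow hβ0 _
  have hlog2 : Real.log p + -(ρ * (m + δ)) * L ≤ Real.log I := by
    have h1 : Real.log (p * β ^ (-(ρ * (m + δ)))) ≤ Real.log I :=
      Real.log_le_log (by positivity) hlow
    rwa [Real.log_mul hp.ne' (Real.rpow_pos_of_pos hβ0 _).ne',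
      Real.log_rpow hβ0] at h1
  -- final arithmetic
  have heq : -(1 / ρ) * (Real.log I / L) = -Real.log I / (ρ * L) := by
    field_simp
  have hρL : 0 < ρ * L := by positivity
  have key1 : m ≤ -(1 / ρ) * (Real.log I / L) := by
    rw [heq, le_div_iff₀ hρL]
    nlinarith [hlog1]
  have key2 : -(1 / ρ) * (Real.log I / L) < m + ε := by
    rw [heq, div_lt_iff₀ hρL]
    nlinarith [hlog2, hρ2]
  rw [Real.dist_eq]
  have hshow : Real.log (∫ ω, β ^ (-(ρ * X ω)) ∂P) = Real.log I := rfl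
  rw [hshow, abs_sub_lt_iff]
  exact ⟨by linarith, by linarith⟩
end

section
/- Let (Ω, P) be a probability space, let X : Ω → ℝ be a measurable random variable that is essentially bounded above, and let β > 1. Then the entropic risk measure of X converges to the essential supremum of X as the risk parameter tends to -∞; that is, lim_{ρ → -∞} ( -(1/ρ) · log_β ( E[ β^{-ρ·X} ] ) ) = essSup X. -/
open MeasureTheory Real Filter

/-- The entropic risk measure converges to the essential supremum as ρ → -∞. -/
theorem entropic_risk_tendsto_essSup
    {Ω : Type*} [MeasurableSpace Ω] (P : Measure Ω) [IsProbabilityMeasure P]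
    (X : Ω → ℝ) (hX : Measurable X)
    (hbdd : ∃ C : ℝ, ∀ᵐ ω ∂P, X ω ≤ C)
    (β : ℝ) (hβ : 1 < β) :
    Tendsto
      (fun ρ : ℝ => -(1 / ρ) * (Real.log (∫ ω, β ^ (-(ρ * X ω)) ∂P) / Real.log β))
      atBot (nhds (essSup X P)) := by
  obtain ⟨C, hC⟩ := hbdd
  set M := essSup X P with hM
  have hβ0 : (0:ℝ) < β := lt_trans one_pos hβ
  have hc : 0 < Real.log β := Real.log_pos hβ
  have hXbdd : IsBoundedUnder (· ≤ ·) (ae P) X := ⟨C, hC⟩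
  have hXM : ∀ᵐ ω ∂P, X ω ≤ M := ae_le_essSup hXbdd
  have hcont : Continuous fun y : ℝ => β ^ y :=
    continuous_iff_continuousAt.mpr fun _ => Real.continuousAt_const_rpow hβ0.ne'
  have hmeas : ∀ t : ℝ, AEStronglyMeasurable (fun ω => β ^ (t * X ω)) P := fun t =>
    (hcont.measurable.comp (hX.const_mul t)).aestronglyMeasurable
  have hint : ∀ t : ℝ, 0 ≤ t → Integrable (fun ω => β ^ (t * X ω)) P := by
    intro t ht
    refine Integrable.mono' (integrable_const (β ^ (t * M))) (hmeas t) ?_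
    filter_upwards [hXM] with ω hω
    rw [Real.norm_eq_abs, abs_of_pos (Real.rpow_pos_of_pos hβ0 _)]
    exact Real.rpow_le_rpow_of_exponent_le hβ.le (mul_le_mul_of_nonneg_left hω ht)
  have key : Tendsto
      (fun t : ℝ => (1 / t) * (Real.log (∫ ω, β ^ (t * X ω) ∂P) / Real.log β))
      atTop (nhds M) := by
    rw [Metric.tendsto_nhds]
    intro ε hε
    set A := {ω | M - ε/2 < X ω} with hA
    have hAmeas : MeasurableSet A := measurableSet_lt measurable_const hX
    have hpA : 0 < (P A).toReal := by
      rcases eq_or_ne (P A) 0 with h0 | h0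
      · exfalso
        have hae : ∀ᵐ ω ∂P, X ω ≤ M - ε/2 := by
          rw [ae_iff]
          convert h0 using 2
          ext ω
          simp [hA]
        have hfreq : ∃ n : ℕ, ∃ᶠ ω in ae P, -(n:ℝ) ≤ X ω := by
          by_contra h
          push_neg at h
          have h' : ∀ n : ℕ, ∀ᵐ ω ∂P, X ω < -(n:ℝ) := by
            intro n
            filter_upwards [h n] with ω hω
            exact hω
          have hall : ∀ᵐ ω ∂P, ∀ n : ℕ, X ω < -(n:ℝ) := ae_all_iff.mpr h'
          obtain ⟨ω, hω⟩ := hall.exists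
          obtain ⟨n, hn⟩ := exists_nat_gt (-X ω)
          exact absurd (hω n) (by push_neg; linarith)
        obtain ⟨n, hfreq⟩ := hfreq
        have hcob : IsCoboundedUnder (· ≤ ·) (ae P) X :=
          IsCoboundedUnder.of_frequently_ge hfreq
        have hle : Filter.limsup X (ae P) ≤ M - ε/2 :=
          limsup_le_of_le hcob hae
        have : M ≤ M - ε/2 := hle
        linarith
      · exact ENNReal.toReal_pos h0 (measure_ne_top P A)
    set p := (P A).toReal with hp
    -- bounds for t > 0
    have hbound : ∀ t : ℝ, 0 < t →
        (M - ε/2) + (Real.log p / Real.log β) * (1/t) ≤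
          (1 / t) * (Real.log (∫ ω, β ^ (t * X ω) ∂P) / Real.log β) ∧
        (1 / t) * (Real.log (∫ ω, β ^ (t * X ω) ∂P) / Real.log β) ≤ M := by
      intro t ht
      set I := ∫ ω, β ^ (t * X ω) ∂P with hI
      have hIupper : I ≤ β ^ (t * M) := by
        have : I ≤ ∫ _ω, β ^ (t * M) ∂P := by
          refine integral_mono_ae (hint t ht.le) (integrable_const _) ?_
          filter_upwards [hXM] with ω hω
          exact Real.rpow_le_rpow_of_exponent_le hβ.le
            (mul_le_mul_of_nonneg_left hω ht.le)
        simpa using this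
      have hIlower : β ^ (t * (M - ε/2)) * p ≤ I := by
        have h1 : ∫ ω, A.indicator (fun _ => β ^ (t * (M - ε/2))) ω ∂P ≤ I := by
          refine integral_mono_ae ((integrable_const _).indicator hAmeas) (hint t ht.le) ?_
          refine Eventually.of_forall fun ω => ?_
          by_cases hω : ω ∈ A
          · rw [Set.indicator_of_mem hω]
            exact Real.rpow_le_rpow_of_exponent_le hβ.le
              (mul_le_mul_of_nonneg_left (le_of_lt hω) ht.le)
          · rw [Set.indicator_of_notMem hω]
            exact (Real.rpow_pos_of_pos hβ0 _).le
        rw [integral_indicator_const _ hAmeas, smul_eq_mul, measureReal_def, ← hp] at h1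
        linarith [h1]
      have hIpos : 0 < I :=
        lt_of_lt_of_le (mul_pos (Real.rpow_pos_of_pos hβ0 _) hpA) hIlower
      constructor
      · have hlog : t * (M - ε/2) * Real.log β + Real.log p ≤ Real.log I := by
          have := Real.log_le_log (mul_pos (Real.rpow_pos_of_pos hβ0 _) hpA) hIlower
          rwa [Real.log_mul (Real.rpow_pos_of_pos hβ0 _).ne' hpA.ne',
            Real.log_rpow hβ0] at this
        rw [← sub_nonneg]
        have h2 : (1 / t) * (Real.log I / Real.log β) -
            ((M - ε/2) + (Real.log p / Real.log β) * (1/t)) =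
            (Real.log I - (t * (M - ε/2) * Real.log β + Real.log p)) / (t * Real.log β) := by
          field_simp
        rw [h2]
        exact div_nonneg (by linarith) (by positivity)
      · have hlog : Real.log I ≤ t * M * Real.log β := by
          have := Real.log_le_log hIpos hIupper
          rwa [Real.log_rpow hβ0] at this
        rw [← sub_nonneg]
        have h2 : M - (1 / t) * (Real.log I / Real.log β) =
            (t * M * Real.log β - Real.log I) / (t * Real.log β) := by
          field_simp
        rw [h2]
        exact div_nonneg (by linarith) (by positivity)
    -- eventual lower bound > M - ε
    have htend : Tendsto (fun t : ℝ => (M - ε/2) + (Real.log p / Real.log β) * (1/t))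
        atTop (nhds (M - ε/2)) := by
      have h1 : Tendsto (fun t : ℝ => 1/t) atTop (nhds 0) := by
        simpa [one_div] using tendsto_inv_atTop_zero
      have h2 : Tendsto (fun t : ℝ => (M - ε/2) + (Real.log p / Real.log β) * (1/t)) atTop
          (nhds ((M - ε/2) + (Real.log p / Real.log β) * 0)) :=
        tendsto_const_nhds.add (tendsto_const_nhds.mul h1)
      simpa using h2
    have hev : ∀ᶠ t : ℝ in atTop,
        M - ε < (M - ε/2) + (Real.log p / Real.log β) * (1/t) :=
      htend.eventually (eventually_gt_nhds (by linarith))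
    filter_upwards [hev, eventually_gt_atTop (0:ℝ)] with t h1 h2
    obtain ⟨hlo, hhi⟩ := hbound t h2
    rw [Real.dist_eq, abs_sub_lt_iff]
    constructor
    · linarith
    · linarith
  have hcomp : Tendsto
      (fun ρ : ℝ => (1 / (-ρ)) * (Real.log (∫ ω, β ^ ((-ρ) * X ω) ∂P) / Real.log β))
      atBot (nhds M) := key.comp tendsto_neg_atBot_atTop
  refine hcomp.congr fun ρ => ?_
  simp [neg_mul, div_neg]
end

section
/- Let (Ω, P) be a probability space, let X : Ω → ℝ be a measurable random variable that is essentially bounded (bounded above and below almost surely), and let β > 1. Then the entropic risk measure of X converges to the expectation of X as the risk parameter tends to 0; that is, the function ρ ↦ -(1/ρ) · log_β ( E[ β^{-ρ·X} ] ), defined for ρ ≠ 0, tends to E[X] as ρ → 0. -/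
open MeasureTheory Real Filter

/-- The entropic risk measure converges to the expectation as `ρ → 0`. -/
theorem entropic_risk_tendsto_expectation
    {Ω : Type*} [MeasurableSpace Ω] (P : Measure Ω) [IsProbabilityMeasure P]
    (X : Ω → ℝ) (hX : Measurable X)
    (hbdd : ∃ C : ℝ, ∀ᵐ ω ∂P, |X ω| ≤ C)
    (β : ℝ) (hβ : 1 < β) :
    Tendsto
      (fun ρ : ℝ => -(1 / ρ) * (Real.log (∫ ω, β ^ (-(ρ * X ω)) ∂P) / Real.log β))
      (nhdsWithin 0 {0}ᶜ) (nhds (∫ ω, X ω ∂P)) := by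
  obtain ⟨C, hC⟩ := hbdd
  set c := Real.log β with hc
  have hc0 : 0 < c := Real.log_pos hβ
  have hβ0 : 0 < β := lt_trans one_pos hβ
  have hC0 : 0 ≤ C := by
    by_contra h
    push_neg at h
    obtain ⟨ω, hω⟩ := hC.exists
    exact h.not_ge ((abs_nonneg _).trans hω)
  have hXint : Integrable X P :=
    (integrable_const C).mono' hX.aestronglyMeasurable
      (hC.mono fun ω h => by simpa using h)
  set F : ℝ → Ω → ℝ := fun ρ ω => Real.exp (c * -(ρ * X ω)) with hF
  set F' : ℝ → Ω → ℝ := fun ρ ω => (c * -(X ω)) * Real.exp (c * -(ρ * X ω)) with hF'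
  -- derivative of the integral
  have key := hasDerivAt_integral_of_dominated_loc_of_deriv_le (μ := P) (F := F) (F' := F')
    (x₀ := (0 : ℝ)) (bound := fun _ => c * C * Real.exp (c * C)) (Metric.ball_mem_nhds (0 : ℝ) one_pos)
    (Eventually.of_forall fun ρ =>
      (((hX.const_mul ρ).neg.const_mul c).exp.aestronglyMeasurable))
    ?_ ?_ ?_ (integrable_const _) ?_
  · obtain ⟨_, hderiv⟩ := key
    have hF0 : (∫ ω, F 0 ω ∂P) = 1 := by
      simp [hF]
    have hF'0 : (∫ ω, F' 0 ω ∂P) = -(c * ∫ ω, X ω ∂P) := by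
      simp only [hF', zero_mul, neg_zero, mul_zero, Real.exp_zero, mul_one]
      rw [integral_const_mul, integral_neg]; ring
    have hlog : HasDerivAt (fun ρ => Real.log (∫ ω, F ρ ω ∂P))
        (-(c * ∫ ω, X ω ∂P)) 0 := by
      have := hderiv.log (by rw [hF0]; norm_num)
      rw [hF0, hF'0] at this
      simpa using this
    rw [hasDerivAt_iff_tendsto_slope] at hlog
    have hmul := hlog.mul_const (-(1 / c))
    have hval : -(c * ∫ ω, X ω ∂P) * -(1 / c) = ∫ ω, X ω ∂P := by
      field_simp
    rw [hval] at hmul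
    refine hmul.congr' ?_
    filter_upwards [self_mem_nhdsWithin] with ρ hρ
    have hlog0 : Real.log (∫ ω, F 0 ω ∂P) = 0 := by rw [hF0]; simp
    have hrw : (∫ ω, β ^ (-(ρ * X ω)) ∂P) = ∫ ω, F ρ ω ∂P := by
      refine integral_congr_ae (Eventually.of_forall fun ω => ?_)
      show β ^ (-(ρ * X ω)) = Real.exp (c * -(ρ * X ω))
      rw [Real.rpow_def_of_pos hβ0]
    rw [slope_def_field]
    simp only [hlog0]
    rw [hrw]
    field_simp
    simp
  · exact integrable_const 1 |>.congr (Eventually.of_forall fun ω => by simp [hF])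
  · exact ((hX.neg.const_mul c).mul ((hX.const_mul 0).neg.const_mul c).exp).aestronglyMeasurable
  · filter_upwards [hC] with ω hω
    intro ρ hρ
    rw [hF']
    have hρ1 : |ρ| ≤ 1 := le_of_lt (by simpa [Real.dist_eq] using hρ)
    have h1 : |c * -(X ω)| ≤ c * C := by
      rw [abs_mul, abs_neg, abs_of_pos hc0]
      exact mul_le_mul_of_nonneg_left hω hc0.le
    have h2 : Real.exp (c * -(ρ * X ω)) ≤ Real.exp (c * C) := by
      apply Real.exp_le_exp.2
      have : c * -(ρ * X ω) ≤ c * |ρ * X ω| := by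
        apply mul_le_mul_of_nonneg_left _ hc0.le
        exact (neg_le_abs _)
      refine this.trans ?_
      apply mul_le_mul_of_nonneg_left _ hc0.le
      rw [abs_mul]
      calc |ρ| * |X ω| ≤ 1 * C := mul_le_mul hρ1 hω (abs_nonneg _) zero_le_one
        _ = C := one_mul _
    calc ‖c * -(X ω) * Real.exp (c * -(ρ * X ω))‖
        = |c * -(X ω)| * Real.exp (c * -(ρ * X ω)) := by
          rw [Real.norm_eq_abs, abs_mul, abs_of_pos (Real.exp_pos _)]
      _ ≤ (c * C) * Real.exp (c * C) :=
          mul_le_mul h1 h2 (Real.exp_pos _).le (by positivity)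
  · refine Eventually.of_forall fun ω => fun ρ _ => ?_
    have h1 : HasDerivAt (fun ρ : ℝ => c * -(ρ * X ω)) (c * -(X ω)) ρ := by
      simpa using (((hasDerivAt_id ρ).mul_const (X ω)).neg.const_mul c)
    have := h1.exp
    simpa [hF, hF', mul_comm] using this
end
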